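/- Let T, ω_max > 0 and let μ satisfy 0 < μ < min(1/(4·T·ω_max), T·ω_max/4). Let t ∈ ℝ and let h : [t, t+T] → ℝ be differentiable with 0 ≤ h(s) ≤ 1 and |h'(s)| ≤ 2·ω_max for all s ∈ [t, t+T], and suppose ∫_t^{t+T} h(s) ds ≥ (1 − μ)·T. Then h(s) ≥ 1 − 2·√(T·ω_max·μ) for all s ∈ [t, t+T]. -/

import Mathlib

/-!
If `h` dips to `1 - δ` at some point `s₀`, the slope bound `2ω` keeps `1 - h` above the tent
`δ - 2ω|s - s₀|`. Half of a tent of half-width `r = √(Tωμ)/ω ≤ T/2` fits on one side of `s₀`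
inside the interval, and since `1 - h ≥ 0` its area `δr - ωr²` bounds `∫ (1 - h) ≤ μT` from
below. For `δ > 2√(Tωμ) = 2ωr` this area exceeds `ωr² = μT`, a contradiction.
-/

open Set intervalIntegral MeasureTheory

lemma abs_sub_le_of_abs_deriv_le {f f' : ℝ → ℝ} {a b L : ℝ}
    (hf : ∀ x ∈ Icc a b, HasDerivAt f (f' x) x) (hf' : ∀ x ∈ Icc a b, |f' x| ≤ L)
    {x y : ℝ} (hx : x ∈ Icc a b) (hy : y ∈ Icc a b) : |f y - f x| ≤ L * |y - x| := by
  simpa only [Real.norm_eq_abs] using (convex_Icc a b).norm_image_sub_le_of_norm_hasDerivWithin_le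
    (fun z hz => (hf z hz).hasDerivWithinAt) (fun z hz => by simpa using hf' z hz) hx hy

lemma mul_sub_le_integral_of_abs_sub_le_right {f : ℝ → ℝ} {x₀ r L : ℝ} (hr : 0 ≤ r)
    (hfi : IntervalIntegrable f volume x₀ (x₀ + r))
    (hf : ∀ x ∈ Icc x₀ (x₀ + r), |f x - f x₀| ≤ L * |x - x₀|) :
    f x₀ * r - L * r ^ 2 / 2 ≤ ∫ x in x₀..x₀ + r, f x := by
  have tent : ∫ x in x₀..x₀ + r, (f x₀ - L * (x - x₀)) = f x₀ * r - L * r ^ 2 / 2 := by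
    rw [integral_sub intervalIntegrable_const ((by fun_prop : Continuous _).intervalIntegrable _ _)]
    simp [integral_comp_sub_right (fun x => x)]
    ring
  rw [← tent]
  refine integral_mono_on (by linarith) ((by fun_prop : Continuous _).intervalIntegrable _ _) hfi
    fun x hx => ?_
  have := hf x hx
  rw [abs_of_nonneg (sub_nonneg.2 hx.1)] at this
  linarith [neg_abs_le (f x - f x₀)]

lemma mul_sub_le_integral_of_abs_sub_le_left {f : ℝ → ℝ} {x₀ r L : ℝ} (hr : 0 ≤ r)
    (hfi : IntervalIntegrable f volume (x₀ - r) x₀)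
    (hf : ∀ x ∈ Icc (x₀ - r) x₀, |f x - f x₀| ≤ L * |x - x₀|) :
    f x₀ * r - L * r ^ 2 / 2 ≤ ∫ x in x₀ - r..x₀, f x := by
  have tent : ∫ x in x₀ - r..x₀, (f x₀ - L * (x₀ - x)) = f x₀ * r - L * r ^ 2 / 2 := by
    rw [integral_sub intervalIntegrable_const ((by fun_prop : Continuous _).intervalIntegrable _ _)]
    simp [integral_comp_sub_left (fun x => x)]
    ring
  rw [← tent]
  refine integral_mono_on (by linarith) ((by fun_prop : Continuous _).intervalIntegrable _ _) hfi
    fun x hx => ?_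
  have := hf x hx
  rw [abs_sub_comm x, abs_of_nonneg (sub_nonneg.2 hx.2)] at this
  linarith [neg_abs_le (f x - f x₀)]

lemma mul_sub_le_integral_of_abs_deriv_le {f f' : ℝ → ℝ} {a b x₀ r L : ℝ}
    (hf : ∀ x ∈ Icc a b, HasDerivAt f (f' x) x) (hf' : ∀ x ∈ Icc a b, |f' x| ≤ L)
    (hf0 : ∀ x ∈ Icc a b, 0 ≤ f x) (hx₀ : x₀ ∈ Icc a b) (hr : 0 ≤ r) (hrab : 2 * r ≤ b - a) :
    f x₀ * r - L * r ^ 2 / 2 ≤ ∫ x in a..b, f x := by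
  have hcont : ContinuousOn f (Icc a b) := fun x hx => (hf x hx).continuousAt.continuousWithinAt
  have hfi : ∀ c d, a ≤ c → c ≤ d → d ≤ b → IntervalIntegrable f volume c d := fun c d hc hcd hd =>
    (hcont.mono (Icc_subset_Icc hc hd)).intervalIntegrable_of_Icc hcd
  have hmono : ∀ c d, a ≤ c → c ≤ d → d ≤ b → ∫ x in c..d, f x ≤ ∫ x in a..b, f x :=
    fun c d hc hcd hd => integral_mono_interval hc hcd hd
      ((ae_restrict_iff' measurableSet_Ioc).2
        (.of_forall fun x hx => hf0 x (Ioc_subset_Icc_self hx)))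
      (hfi a b le_rfl (by linarith) le_rfl)
  have hlip : ∀ x ∈ Icc a b, |f x - f x₀| ≤ L * |x - x₀| := fun x hx =>
    abs_sub_le_of_abs_deriv_le hf hf' hx₀ hx
  obtain ⟨ha, hb⟩ := hx₀
  rcases le_total (x₀ + r) b with hright | hleft
  · exact (mul_sub_le_integral_of_abs_sub_le_right hr (hfi _ _ ha (by linarith) hright)
      fun x hx => hlip x ⟨ha.trans hx.1, hx.2.trans hright⟩).trans
      (hmono _ _ ha (by linarith) hright)
  · exact (mul_sub_le_integral_of_abs_sub_le_left hr (hfi _ _ (by linarith) (by linarith) hb)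
      fun x hx => hlip x ⟨by linarith [hx.1], hx.2.trans hb⟩).trans
      (hmono _ _ (by linarith) (by linarith) hb)

theorem scalar_lower_bound
    (T ωmax μ t : ℝ) (hT : 0 < T) (hωmax : 0 < ωmax)
    (hμ0 : 0 < μ) (hμ1 : μ < min (1 / (4 * T * ωmax)) (T * ωmax / 4))
    (h h' : ℝ → ℝ)
    (hderiv : ∀ s ∈ Set.Icc t (t + T), HasDerivAt h (h' s) s)
    (hrange : ∀ s ∈ Set.Icc t (t + T), 0 ≤ h s ∧ h s ≤ 1)
    (hbd : ∀ s ∈ Set.Icc t (t + T), |h' s| ≤ 2 * ωmax)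
    (hint : (1 - μ) * T ≤ ∫ s in t..(t + T), h s) :
    ∀ s ∈ Set.Icc t (t + T), 1 - 2 * Real.sqrt (T * ωmax * μ) ≤ h s := by
  intro s hs
  by_contra! hdip
  set ε := Real.sqrt (T * ωmax * μ)
  set r := ε / ωmax
  have hr : 0 < r := by positivity
  have harea : ωmax * r ^ 2 = μ * T := by
    rw [div_pow, Real.sq_sqrt (by positivity)]
    field_simp
  have hrT : 2 * r ≤ T := by
    have hμ : 4 * μ < T * ωmax := by linarith [hμ1.trans_le (min_le_right _ _)]
    by_contra! hTr
    nlinarith [mul_lt_mul_of_pos_left (mul_self_lt_mul_self hT.le hTr) hωmax]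
  have hh : IntervalIntegrable h volume t (t + T) :=
    ContinuousOn.intervalIntegrable_of_Icc (by linarith)
      fun x hx => (hderiv x hx).continuousAt.continuousWithinAt
  have hdefect : (1 - h s) * r - 2 * ωmax * r ^ 2 / 2 ≤ T - ∫ x in t..t + T, h x := by
    have := mul_sub_le_integral_of_abs_deriv_le (f := fun x => 1 - h x) (r := r)
      (fun x hx => (hderiv x hx).const_sub 1) (fun x hx => by simpa using hbd x hx)
      (fun x hx => sub_nonneg.2 (hrange x hx).2) hs hr.le (by linarith)
    simpa [integral_sub intervalIntegrable_const hh] using this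
  have htent : 2 * ωmax * r ^ 2 < (1 - h s) * r := by
    have : 2 * ωmax * r ^ 2 = 2 * ε * r := by simp only [r]; field_simp
    rw [this]
    exact mul_lt_mul_of_pos_right (by linarith) hr
  linarith
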